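/- For real p, q ≥ 0, Re(ρ) > −1/2, Re(ρ ± λ) > −1/2, and natural number n, the following derivative formula holds: dⁿ/dzⁿ [ e^{z/2} z^{−ρ−1/2} M_{p,q;λ,ρ}(z) ] = [(ρ−λ+1/2)_n / (2ρ+1)_n] · e^{z/2} z^{−ρ−n/2−1/2} · M_{p,q; λ−n/2, ρ+n/2}(z) for z ∈ ℂ \ (−∞, 0]. -/

import Mathlib

open MeasureTheory

/-- The (p,q)-extended beta function. -/
noncomputable def extBeta (p q x y : ℂ) : ℂ :=
  ∫ t in (0:ℝ)..1, (t:ℂ) ^ (x - 1) * ((1:ℂ) - t) ^ (y - 1) *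
    Complex.exp (-p / t - q / (1 - t))

/-- The (p,q)-confluent hypergeometric function, defined by its series. -/
noncomputable def Phi (p q b c z : ℂ) : ℂ :=
  ∑' n : ℕ, extBeta p q (b + n) (c - b) / Complex.betaIntegral b (c - b) * z ^ n / n.factorial

/-- The Pochhammer symbol (x)_n. -/
noncomputable def poch (x : ℂ) (n : ℕ) : ℂ := (ascPochhammer ℂ n).eval x

/-- The (p,q)-Whittaker function. -/
noncomputable def M (p q lam rho z : ℂ) : ℂ :=
  z ^ (rho + 1/2) * Complex.exp (-z / 2) * Phi p q (rho - lam + 1/2) (2 * rho + 1) z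

/-!
Cancelling `e^{z/2} z^{-ρ-1/2}` against the prefactor of `M` reduces the formula to
`dⁿ/dzⁿ Φ(b; c; z) = (b)ₙ / (c)ₙ · Φ(b + n; c + n; z)` with `b = ρ - λ + 1/2`, `c = 2ρ + 1`.
For `p, q ≥ 0` the factor `exp(-p/t - q/(1-t))` has modulus at most one, so the coefficients
`B_{p,q}(b + k, c - b)` are bounded by a convergent beta integral, uniformly in `k`. Hence the
series `∑ aₖ zᵏ / k!` defining `Φ` may be differentiated termwise, which just shifts `aₖ` to
`aₖ₊ₙ`; and `B(b + n, c - b) = (b)ₙ / (c)ₙ · B(b, c - b)` (from `B = ΓΓ/Γ`) converts this shift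
of the index into the shift of the parameters.
-/

lemma norm_exp_neg_div_sub_div_le_one {p q t : ℝ} (hp : 0 ≤ p) (hq : 0 ≤ q) (ht₀ : 0 < t)
    (ht₁ : t ≤ 1) : ‖Complex.exp (-(p : ℂ) / t - (q : ℂ) / (1 - t))‖ ≤ 1 := by
  have hre : (-(p : ℂ) / t - (q : ℂ) / (1 - t)).re = -(p / t) - q / (1 - t) := by
    rw [show -(p : ℂ) / t - (q : ℂ) / (1 - t) = ((-(p / t) - q / (1 - t) : ℝ) : ℂ) by
      push_cast; ring, Complex.ofReal_re]
  rw [Complex.norm_exp, hre, Real.exp_le_one_iff]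
  have := div_nonneg hp ht₀.le
  have := div_nonneg hq (sub_nonneg.2 ht₁)
  linarith

lemma norm_extBeta_le {p q : ℝ} (hp : 0 ≤ p) (hq : 0 ≤ q) {b x y : ℂ} (hb : 0 < b.re)
    (hy : 0 < y.re) (hbx : b.re ≤ x.re) :
    ‖extBeta p q x y‖ ≤ ∫ t in (0 : ℝ)..1, ‖(t : ℂ) ^ (b - 1) * (1 - (t : ℂ)) ^ (y - 1)‖ := by
  refine intervalIntegral.norm_integral_le_of_norm_le zero_le_one
    (Filter.Eventually.of_forall fun t ht => ?_) (Complex.betaIntegral_convergent hb hy).norm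
  have hpow : ‖(t : ℂ) ^ (x - 1)‖ ≤ ‖(t : ℂ) ^ (b - 1)‖ := by
    rw [Complex.norm_cpow_eq_rpow_re_of_pos ht.1, Complex.norm_cpow_eq_rpow_re_of_pos ht.1]
    exact Real.rpow_le_rpow_of_exponent_ge ht.1 ht.2 (by simpa using hbx)
  rw [norm_mul, norm_mul, norm_mul]
  calc ‖(t : ℂ) ^ (x - 1)‖ * ‖(1 - (t : ℂ)) ^ (y - 1)‖ *
        ‖Complex.exp (-(p : ℂ) / t - (q : ℂ) / (1 - t))‖
      ≤ ‖(t : ℂ) ^ (b - 1)‖ * ‖(1 - (t : ℂ)) ^ (y - 1)‖ * 1 := by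
        gcongr
        exact norm_exp_neg_div_sub_div_le_one hp hq ht.1 ht.2
    _ = _ := mul_one _

lemma ne_neg_natCast_of_re_pos {u : ℂ} (hu : 0 < u.re) (k : ℕ) : u ≠ -k := by
  rintro rfl
  simp only [Complex.neg_re, Complex.natCast_re] at hu
  exact (neg_nonpos.2 k.cast_nonneg).not_gt hu

lemma poch_eq_Gamma_div_Gamma {u : ℂ} (hu : 0 < u.re) (n : ℕ) :
    poch u n = Complex.Gamma (u + n) / Complex.Gamma u :=
  (Complex.Gamma_add_nat_div_Gamma_eq u (ne_neg_natCast_of_re_pos hu)).symm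

lemma poch_ne_zero {u : ℂ} (hu : 0 < u.re) (n : ℕ) : poch u n ≠ 0 := by
  rw [poch_eq_Gamma_div_Gamma hu]
  have hun : 0 < (u + n).re := by simpa using add_pos_of_pos_of_nonneg hu n.cast_nonneg
  exact div_ne_zero (Complex.Gamma_ne_zero_of_re_pos hun) (Complex.Gamma_ne_zero_of_re_pos hu)

lemma betaIntegral_eq_Gamma_mul_Gamma_div {u v : ℂ} (hu : 0 < u.re) (hv : 0 < v.re) :
    Complex.betaIntegral u v = Complex.Gamma u * Complex.Gamma v / Complex.Gamma (u + v) := by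
  rw [Complex.Gamma_mul_Gamma_eq_betaIntegral hu hv, mul_div_cancel_left₀]
  exact Complex.Gamma_ne_zero_of_re_pos (by simpa using add_pos hu hv)

lemma betaIntegral_ne_zero {u v : ℂ} (hu : 0 < u.re) (hv : 0 < v.re) :
    Complex.betaIntegral u v ≠ 0 := by
  rw [betaIntegral_eq_Gamma_mul_Gamma_div hu hv]
  have huv : 0 < (u + v).re := by simpa using add_pos hu hv
  exact div_ne_zero (mul_ne_zero (Complex.Gamma_ne_zero_of_re_pos hu)
    (Complex.Gamma_ne_zero_of_re_pos hv)) (Complex.Gamma_ne_zero_of_re_pos huv)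

lemma betaIntegral_add_nat {u v : ℂ} (hu : 0 < u.re) (hv : 0 < v.re) (n : ℕ) :
    Complex.betaIntegral (u + n) v = poch u n / poch (u + v) n * Complex.betaIntegral u v := by
  have huv : 0 < (u + v).re := by simpa using add_pos hu hv
  have hun : 0 < (u + n).re := by simpa using add_pos_of_pos_of_nonneg hu n.cast_nonneg
  rw [betaIntegral_eq_Gamma_mul_Gamma_div hu hv, betaIntegral_eq_Gamma_mul_Gamma_div hun hv,
    poch_eq_Gamma_div_Gamma hu, poch_eq_Gamma_div_Gamma huv, add_right_comm]
  have := Complex.Gamma_ne_zero_of_re_pos hu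
  have := Complex.Gamma_ne_zero_of_re_pos huv
  field_simp

open scoped Nat

section BoundedCoeffSeries

variable {a : ℕ → ℂ} {C : ℝ}

lemma summable_mul_pow_div_factorial (ha : ∀ k, ‖a k‖ ≤ C) (z : ℂ) :
    Summable fun k => a k * z ^ k / k ! := by
  refine .of_norm_bounded ((Real.summable_pow_div_factorial ‖z‖).mul_left C) fun k => ?_
  rw [norm_div, norm_mul, norm_pow, Complex.norm_natCast, mul_div_assoc]
  gcongr
  exact ha k

lemma hasDerivAt_tsum_mul_pow_div_factorial (ha : ∀ k, ‖a k‖ ≤ C) (z : ℂ) :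
    HasDerivAt (fun w => ∑' k, a k * w ^ k / k !) (∑' k, a (k + 1) * z ^ k / k !) z := by
  set R := ‖z‖ + 1
  have hR : 1 ≤ R := by simp [R]
  -- `k ≤ 2 ^ k` turns `k Rᵏ⁻¹ / k!` into the summable majorant `(2R)ᵏ / k!`
  have hbound : ∀ k, ∀ w ∈ Metric.ball (0 : ℂ) R,
      ‖a k * (k * w ^ (k - 1)) / (k ! : ℂ)‖ ≤ C * ((2 * R) ^ k / k !) := by
    intro k w hw
    rw [mem_ball_zero_iff] at hw
    rw [norm_div, norm_mul, norm_mul, norm_pow, Complex.norm_natCast, Complex.norm_natCast,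
      ← mul_div_assoc]
    gcongr ?_ / _
    refine mul_le_mul (ha k) ?_ (by positivity) ((norm_nonneg _).trans (ha k))
    rw [mul_pow]
    gcongr
    · exact_mod_cast Nat.lt_two_pow_self.le
    · calc ‖w‖ ^ (k - 1) ≤ R ^ (k - 1) := by gcongr
        _ ≤ R ^ k := pow_le_pow_right₀ hR (Nat.sub_le k 1)
  have hderiv := hasDerivAt_tsum_of_isPreconnected
    ((Real.summable_pow_div_factorial (2 * R)).mul_left C) Metric.isOpen_ball
    (convex_ball (0 : ℂ) R).isPreconnected
    (fun k w _ => ((hasDerivAt_pow k w).const_mul (a k)).div_const (k ! : ℂ)) hbound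
    (Metric.mem_ball_self (by positivity)) (summable_mul_pow_div_factorial ha 0)
    (by simp [R] : z ∈ Metric.ball (0 : ℂ) R)
  have hsummable : Summable fun k => a k * (k * z ^ (k - 1)) / (k ! : ℂ) :=
    .of_norm_bounded ((Real.summable_pow_div_factorial (2 * R)).mul_left C)
      fun k => hbound k z (by simp [R])
  rwa [hsummable.tsum_eq_zero_add, CharP.cast_eq_zero, zero_mul, mul_zero, zero_div, zero_add,
    tsum_congr fun k => ?_] at hderiv
  rw [Nat.factorial_succ, Nat.add_sub_cancel]
  push_cast
  field_simp

lemma iteratedDeriv_tsum_mul_pow_div_factorial (ha : ∀ k, ‖a k‖ ≤ C) (n : ℕ) :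
    iteratedDeriv n (fun w => ∑' k, a k * w ^ k / k !) =
      fun z => ∑' k, a (k + n) * z ^ k / k ! := by
  induction n with
  | zero => simp
  | succ n ih =>
    ext z
    rw [iteratedDeriv_succ, ih]
    simp_rw [← add_assoc, add_right_comm _ n 1]
    exact (hasDerivAt_tsum_mul_pow_div_factorial (fun k => ha (k + n)) z).deriv

end BoundedCoeffSeries

lemma iteratedDeriv_Phi {p q : ℝ} (hp : 0 ≤ p) (hq : 0 ≤ q) {b c : ℂ} (hb : 0 < b.re)
    (hcb : 0 < (c - b).re) (n : ℕ) (z : ℂ) :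
    iteratedDeriv n (Phi p q b c) z = poch b n / poch c n * Phi p q (b + n) (c + n) z := by
  have hbound : ∀ k : ℕ, ‖extBeta p q (b + k) (c - b) / Complex.betaIntegral b (c - b)‖ ≤
      (∫ t in (0 : ℝ)..1, ‖(t : ℂ) ^ (b - 1) * (1 - (t : ℂ)) ^ (c - b - 1)‖) /
        ‖Complex.betaIntegral b (c - b)‖ := fun k => by
    rw [norm_div]
    gcongr
    exact norm_extBeta_le hp hq hb hcb (by simp)
  have hc : 0 < c.re := by simpa using add_pos hb hcb
  refine (congrFun (iteratedDeriv_tsum_mul_pow_div_factorial hbound n) z).trans ?_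
  rw [Phi, ← tsum_mul_left]
  refine tsum_congr fun k => ?_
  have hB := betaIntegral_add_nat hb hcb n
  rw [add_sub_cancel] at hB
  rw [add_sub_add_right_eq_sub, hB, Nat.cast_add, add_right_comm, ← add_assoc]
  have := poch_ne_zero hb n
  have := poch_ne_zero hc n
  have := betaIntegral_ne_zero hb hcb
  field_simp

lemma exp_mul_cpow_mul_M_eq_Phi (p q lam rho : ℂ) {w : ℂ} (hw : w ≠ 0) :
    Complex.exp (w / 2) * w ^ (-rho - 1/2) * M p q lam rho w =
      Phi p q (rho - lam + 1/2) (2 * rho + 1) w := by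
  have hpow : w ^ (-rho - 1/2) * w ^ (rho + 1/2) = 1 := by
    rw [← Complex.cpow_add _ _ hw, show -rho - 1/2 + (rho + 1/2) = 0 by ring, Complex.cpow_zero]
  have hexp : Complex.exp (w / 2) * Complex.exp (-w / 2) = 1 := by
    rw [← Complex.exp_add, show w / 2 + -w / 2 = 0 by ring, Complex.exp_zero]
  rw [M]
  set F := Phi p q (rho - lam + 1/2) (2 * rho + 1) w
  linear_combination (Complex.exp (w / 2) * Complex.exp (-w / 2) * F) * hpow + F * hexp

theorem M_deriv_general (p q : ℝ) (hp : 0 ≤ p) (hq : 0 ≤ q) (lam rho : ℂ)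
    (h1 : -(1/2) < (rho + lam).re) (h2 : -(1/2) < (rho - lam).re)
    (n : ℕ) (z : ℂ) (hz : ∀ x : ℝ, x ≤ 0 → (x : ℂ) ≠ z) :
    iteratedDeriv n (fun w => Complex.exp (w / 2) * w ^ (-rho - 1/2) * M p q lam rho w) z =
      poch (rho - lam + 1/2) n / poch (2 * rho + 1) n *
        Complex.exp (z / 2) * z ^ (-rho - n / 2 - 1/2) *
        M p q (lam - n / 2) (rho + n / 2) z := by
  have hz0 : z ≠ 0 := fun h => hz 0 le_rfl (by simp [h])
  have hb : 0 < (rho - lam + 1/2).re := by norm_num at h2 ⊢; linarith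
  have hcb : 0 < (2 * rho + 1 - (rho - lam + 1/2)).re := by
    rw [show 2 * rho + 1 - (rho - lam + 1/2) = rho + lam + 1/2 by ring]
    norm_num at h1 ⊢; linarith
  have hlocal : (fun w => Complex.exp (w / 2) * w ^ (-rho - 1/2) * M p q lam rho w) =ᶠ[nhds z]
      Phi p q (rho - lam + 1/2) (2 * rho + 1) :=
    (eventually_ne_nhds hz0).mono fun w hw => exp_mul_cpow_mul_M_eq_Phi _ _ _ _ hw
  have hshifted := exp_mul_cpow_mul_M_eq_Phi p q (lam - n / 2) (rho + n / 2) hz0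
  rw [show -(rho + n / 2) - 1/2 = -rho - n / 2 - 1/2 by ring,
    show rho + n / 2 - (lam - n / 2) + 1/2 = rho - lam + 1/2 + n by ring,
    show 2 * (rho + n / 2) + 1 = 2 * rho + 1 + n by ring] at hshifted
  rw [hlocal.iteratedDeriv_eq n, iteratedDeriv_Phi hp hq hb hcb n z, ← hshifted]
  ring

theorem M_deriv (p q : ℝ) (hp : 0 ≤ p) (hq : 0 ≤ q) (lam rho : ℂ)
    (hr : -(1/2) < rho.re) (h1 : -(1/2) < (rho + lam).re) (h2 : -(1/2) < (rho - lam).re)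
    (n : ℕ) (z : ℂ) (hz : ∀ x : ℝ, x ≤ 0 → (x : ℂ) ≠ z) :
    iteratedDeriv n (fun w => Complex.exp (w / 2) * w ^ (-rho - 1/2) * M p q lam rho w) z =
      poch (rho - lam + 1/2) n / poch (2 * rho + 1) n *
        Complex.exp (z / 2) * z ^ (-rho - n / 2 - 1/2) *
        M p q (lam - n / 2) (rho + n / 2) z :=
  M_deriv_general p q hp hq lam rho h1 h2 n z hz
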